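/- If (e1, e2) is a sync-preserving race of a trace σ, then there exists a correct reordering ρ of σ in which both e1 and e2 are σ-enabled and whose total order is a restriction of the trace order of σ (i.e., ρ is a subsequence of σ). -/

import Mathlib

/- A model of concurrent program traces: events are read/write/acquire/release
operations performed by threads; a trace is a finite sequence of events,
identified by their indices. -/

inductive Op where
  | read  (x : ℕ)
  | write (x : ℕ)
  | acq (l : ℕ)
  | rel (l : ℕ)
deriving DecidableEq

structure Event where
  thread : ℕ
  op : Op
deriving DecidableEq

def evAt (σ : List Event) (i : ℕ) : Event := σ.getD i ⟨0, Op.read 0⟩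

def threadOf (σ : List Event) (i : ℕ) : ℕ := (evAt σ i).thread

def isAcq (σ : List Event) (l i : ℕ) : Prop := i < σ.length ∧ (evAt σ i).op = Op.acq l
def isRel (σ : List Event) (l i : ℕ) : Prop := i < σ.length ∧ (evAt σ i).op = Op.rel l
def isRead (σ : List Event) (x i : ℕ) : Prop := i < σ.length ∧ (evAt σ i).op = Op.read x
def isWrite (σ : List Event) (x i : ℕ) : Prop := i < σ.length ∧ (evAt σ i).op = Op.write x

/-- `e` is an event on lock `l` (an acquire or release of `l`). -/
def onLock (l : ℕ) (e : Event) : Bool := decide (e.op = Op.acq l ∨ e.op = Op.rel l)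

/-- Thread order: `i` and `j` are events of the same thread with `i` not after `j`. -/
def TO (σ : List Event) (i j : ℕ) : Prop :=
  i ≤ j ∧ j < σ.length ∧ threadOf σ i = threadOf σ j

/-- Alternating sequence of matched acquire/release pairs on lock `l`, each pair
performed by a single thread, with at most one unmatched acquire at the end. -/
inductive LockAlt (l : ℕ) : List Event → Prop
  | nil : LockAlt l []
  | pending (t : ℕ) : LockAlt l [⟨t, Op.acq l⟩]
  | pair (t : ℕ) {rest : List Event} : LockAlt l rest →
      LockAlt l (⟨t, Op.acq l⟩ :: ⟨t, Op.rel l⟩ :: rest)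

/-- Well-formedness of an event sequence: for each lock, the projection alternates
matched acquire/release pairs, with at most one pending acquire. -/
def WellFormedEvents (es : List Event) : Prop := ∀ l, LockAlt l (es.filter (onLock l))

/-- Words of the language `(Σ_t ⟨t, acq(l)⟩ · ⟨t, rel(l)⟩)*`. -/
inductive PairsLang (l : ℕ) : List Event → Prop
  | nil : PairsLang l []
  | pair (t : ℕ) {rest : List Event} : PairsLang l rest →
      PairsLang l (⟨t, Op.acq l⟩ :: ⟨t, Op.rel l⟩ :: rest)

/-- Lock semantics: for every lock `l`, the projection of the trace onto events on `l`
is a prefix of a word in the language `(Σ_t ⟨t, acq(l)⟩ · ⟨t, rel(l)⟩)*`. -/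
def LockSem (σ : List Event) : Prop :=
  ∀ l, ∃ w, PairsLang l w ∧ (σ.filter (onLock l)) <+: w

/-- Thread `t` holds lock `l` after the prefix of length `n`: the last event of the
prefix on lock `l` is an acquire of `l` by `t`. -/
def Holds (σ : List Event) (n t l : ℕ) : Prop :=
  ∃ i, i < n ∧ isAcq σ l i ∧ threadOf σ i = t ∧
    ∀ j, i < j → j < n → j < σ.length → onLock l (evAt σ j) = false

/-- `r` is the matching release of the acquire `a`: same thread, same lock, with no
intervening event on that lock in between. -/
def MatchRel (σ : List Event) (a r : ℕ) : Prop :=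
  ∃ l, isAcq σ l a ∧ isRel σ l r ∧ a < r ∧ threadOf σ a = threadOf σ r ∧
    ∀ k, a < k → k < r → ¬ (isAcq σ l k ∨ isRel σ l k)

/-- `i` is the last write (on the common variable) before the read `j` in `σ`. -/
def LastWrite (σ : List Event) (i j : ℕ) : Prop :=
  ∃ x, isWrite σ x i ∧ isRead σ x j ∧ i < j ∧ ∀ k, i < k → k < j → ¬ isWrite σ x k

/-- `i` is the immediate thread-order predecessor of `j` in `σ`. -/
def Prev (σ : List Event) (j i : ℕ) : Prop :=
  i < j ∧ j < σ.length ∧ threadOf σ i = threadOf σ j ∧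
    ∀ k, i < k → k < j → threadOf σ k ≠ threadOf σ j

/-- `S` is downward-closed with respect to thread order. -/
def TODownClosed (σ : List Event) (S : Set ℕ) : Prop :=
  ∀ i j, TO σ i j → j ∈ S → i ∈ S

/-- `S` is `(TO, lw)`-closed. -/
def TOLWClosed (σ : List Event) (S : Set ℕ) : Prop :=
  TODownClosed σ S ∧ ∀ i j, LastWrite σ i j → j ∈ S → i ∈ S

/-- `S` is sync-preserving closed. -/
def SPClosed (σ : List Event) (S : Set ℕ) : Prop :=
  TOLWClosed σ S ∧
    ∀ l a1 a2 r1, isAcq σ l a1 → isAcq σ l a2 → a1 < a2 →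
      a1 ∈ S → a2 ∈ S → MatchRel σ a1 r1 → r1 ∈ S

/-- The sync-preserving closure of `S`. -/
def SPClosure (σ : List Event) (S : Set ℕ) : Set ℕ :=
  ⋂₀ {S' : Set ℕ | S ⊆ S' ∧ SPClosed σ S'}

def PrevSet (σ : List Event) (j : ℕ) : Set ℕ := {i | Prev σ j i}

def SPIdeal (σ : List Event) (e1 e2 : ℕ) : Set ℕ :=
  SPClosure σ (PrevSet σ e1 ∪ PrevSet σ e2)

/-- `i` occurs before `j` in the reordering `ρ` (a list of σ-indices). -/
def RBefore (ρ : List ℕ) (i j : ℕ) : Prop :=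
  i ∈ ρ ∧ j ∈ ρ ∧ ρ.idxOf i < ρ.idxOf j

/-- `i` is the last write before the read `j` in the reordering `ρ`. -/
def LastWriteIn (σ : List Event) (ρ : List ℕ) (i j : ℕ) : Prop :=
  ∃ x, isWrite σ x i ∧ isRead σ x j ∧ RBefore ρ i j ∧
    ∀ k, isWrite σ x k → ¬ (RBefore ρ i k ∧ RBefore ρ k j)

/-- `ρ` (a duplicate-free list of σ-indices, read as a trace) is a correct reordering
of `σ`: a well-formed trace over a subset of events of `σ` that is downward-closed
under thread order, respects thread order, and in which every read observes the
same last write as in `σ`. -/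
def CorrectReordering (σ : List Event) (ρ : List ℕ) : Prop :=
  ρ.Nodup ∧ (∀ i ∈ ρ, i < σ.length) ∧
  WellFormedEvents (ρ.map (evAt σ)) ∧
  (∀ i j, TO σ i j → j ∈ ρ → i ∈ ρ) ∧
  (∀ i j, i ∈ ρ → j ∈ ρ → i ≠ j → TO σ i j → RBefore ρ i j) ∧
  (∀ j x, isRead σ x j → j ∈ ρ → ∀ i, LastWriteIn σ ρ i j ↔ LastWrite σ i j)

/-- Event `e` of `σ` is σ-enabled in the reordering `ρ`. -/
def EnabledIn (σ : List Event) (ρ : List ℕ) (e : ℕ) : Prop :=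
  e < σ.length ∧ e ∉ ρ ∧ ∀ i, i ≠ e → TO σ i e → i ∈ ρ

/-- `ρ` is sync-preserving w.r.t. `σ`: any two same-lock acquires occurring in `ρ`
appear in the same relative order as in `σ`. -/
def SyncPreserving (σ : List Event) (ρ : List ℕ) : Prop :=
  ∀ l a1 a2, isAcq σ l a1 → isAcq σ l a2 → a1 ∈ ρ → a2 ∈ ρ →
    (RBefore ρ a1 a2 ↔ a1 < a2)

/-- Conflicting events: different threads, common variable, at least one write. -/
def Conflict (σ : List Event) (i j : ℕ) : Prop :=
  i < σ.length ∧ j < σ.length ∧ threadOf σ i ≠ threadOf σ j ∧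
    ∃ x, (isWrite σ x i ∧ (isWrite σ x j ∨ isRead σ x j)) ∨
         (isRead σ x i ∧ isWrite σ x j)

/-- `(e1, e2)` is a sync-preserving race of `σ`. -/
def SPRace (σ : List Event) (e1 e2 : ℕ) : Prop :=
  Conflict σ e1 e2 ∧ ∃ ρ : List ℕ, CorrectReordering σ ρ ∧ SyncPreserving σ ρ ∧
    EnabledIn σ ρ e1 ∧ EnabledIn σ ρ e2

/-- Happens-before: smallest transitive relation containing thread order and
ordering each release of a lock before every later acquire of that lock. -/
inductive HB (σ : List Event) : ℕ → ℕ → Prop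
  | to {i j : ℕ} : TO σ i j → HB σ i j
  | relacq {l i j : ℕ} : isRel σ l i → isAcq σ l j → i < j → HB σ i j
  | trans {i j k : ℕ} : HB σ i j → HB σ j k → HB σ i k

/-- Schedulable-happens-before: smallest transitive relation containing HB and
ordering each write of a variable before every later read of that variable. -/
inductive SHB (σ : List Event) : ℕ → ℕ → Prop
  | hb {i j : ℕ} : HB σ i j → SHB σ i j
  | wr {x i j : ℕ} : isWrite σ x i → isRead σ x j → i < j → SHB σ i j
  | trans {i j k : ℕ} : SHB σ i j → SHB σ j k → SHB σ i k

/-!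
Sorting the events of a sync-preserving correct reordering `ρ` into trace order gives the
required reordering. The event set is unchanged, so thread-order closure and enabledness
survive, and last writes are preserved because the set is closed under last writes. The
lock projection of the sorted list is σ's alternation of acquire/release pairs restricted to
`ρ`. It stays well formed because a release in `ρ` brings its acquire along (thread order),
and, by sync preservation, an acquire in `ρ` followed by a later acquire of the same lock in `ρ`
has its σ-release in `ρ`.
-/

open List

section ListOrder

theorem lt_of_pair_sublist {L : List ℕ} (hs : L.Pairwise (· < ·)) {a b : ℕ}
    (h : [a, b] <+ L) : a < b := by
  simpa using hs.sublist h

theorem rBefore_iff_pair_sublist {L : List ℕ} (h : L.Nodup) {a b : ℕ} :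
    RBefore L a b ↔ [a, b] <+ L := by
  induction L with
  | nil => simp [RBefore]
  | cons x t ih =>
    rw [nodup_cons] at h
    rw [sublist_cons_iff, ← ih h.2]
    by_cases hax : a = x
    · subst hax
      by_cases hbx : b = a
      · subst hbx; simp [RBefore, h.1]
      · simp [RBefore, idxOf_cons_ne _ (Ne.symm hbx), hbx, h.1]
    · by_cases hbx : b = x
      · subst hbx; simp [RBefore, idxOf_cons_ne _ (Ne.symm hax), hax, h.1]
      · simp [RBefore, idxOf_cons_ne _ (Ne.symm hax), idxOf_cons_ne _ (Ne.symm hbx), hax, hbx]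

theorem rBefore_iff_lt {L : List ℕ} (hs : L.Pairwise (· < ·)) {a b : ℕ} :
    RBefore L a b ↔ a ∈ L ∧ b ∈ L ∧ a < b := by
  rw [rBefore_iff_pair_sublist hs.nodup]
  refine ⟨fun h => ⟨h.subset (by simp), h.subset (by simp), lt_of_pair_sublist hs h⟩,
    fun ⟨ha, hb, hab⟩ => sublist_of_subperm_of_pairwise ?_ (by simpa using hab) hs⟩
  exact subperm_of_subset (by simpa using hab.ne) (by simp [ha, hb, subset_def])

theorem le_or_le_of_pair_infix {L : List ℕ} (hs : L.Pairwise (· < ·)) {a b k : ℕ}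
    (hab : [a, b] <:+: L) (hk : k ∈ L) : k ≤ a ∨ b ≤ k := by
  obtain ⟨s, t, rfl⟩ := hab
  simp only [pairwise_append, pairwise_cons, mem_append, mem_cons, not_mem_nil,
    or_false] at hs hk
  rcases hk with (hk | rfl | rfl) | hk
  · exact .inl (hs.1.2.2 k hk a (.inl rfl)).le
  · exact .inl le_rfl
  · exact .inr le_rfl
  · exact .inr (hs.2.2 b (.inr (.inr rfl)) k hk).le

end ListOrder

section Locks

variable {σ : List Event} {l : ℕ}

theorem isAcq.ne_of_isRel {l' i j : ℕ} (hi : isAcq σ l i) (hj : isRel σ l' j) : i ≠ j := by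
  rintro rfl
  exact Op.noConfusion (hi.2.symm.trans hj.2)

theorem onLock_evAt_iff {i : ℕ} (hi : i < σ.length) :
    onLock l (evAt σ i) ↔ isAcq σ l i ∨ isRel σ l i := by
  simp [onLock, isAcq, isRel, hi]

theorem evAt_of_isAcq {i : ℕ} (h : isAcq σ l i) : evAt σ i = ⟨threadOf σ i, .acq l⟩ :=
  congrArg₂ Event.mk rfl h.2

theorem evAt_of_isRel {i : ℕ} (h : isRel σ l i) : evAt σ i = ⟨threadOf σ i, .rel l⟩ :=
  congrArg₂ Event.mk rfl h.2

theorem PairsLang.lockAlt_of_prefix {w u : List Event} (hw : PairsLang l w) (hu : u <+: w) :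
    LockAlt l u := by
  induction hw generalizing u with
  | nil => rw [prefix_nil.mp hu]; exact .nil
  | pair t _ ih =>
    rcases u with _ | ⟨e, _ | ⟨e', u⟩⟩
    · exact .nil
    · obtain ⟨rfl, -⟩ := cons_prefix_cons.mp hu
      exact .pending t
    · rw [cons_prefix_cons, cons_prefix_cons] at hu
      obtain ⟨rfl, rfl, hu⟩ := hu
      exact .pair t (ih hu)

def IsLockPair (σ : List Event) (l a r : ℕ) : Prop :=
  isAcq σ l a ∧ isRel σ l r ∧ threadOf σ a = threadOf σ r

inductive LockAltIdx (σ : List Event) (l : ℕ) : List ℕ → Prop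
  | nil : LockAltIdx σ l []
  | pending {a : ℕ} : isAcq σ l a → LockAltIdx σ l [a]
  | pair {a r : ℕ} {rest : List ℕ} : IsLockPair σ l a r → LockAltIdx σ l rest →
      LockAltIdx σ l (a :: r :: rest)

theorem LockAltIdx.lockAlt_map {L : List ℕ} (h : LockAltIdx σ l L) :
    LockAlt l (L.map (evAt σ)) := by
  induction h with
  | nil => exact .nil
  | pending ha =>
    rw [map_singleton, evAt_of_isAcq ha]
    exact .pending _
  | pair hp _ ih =>
    rw [map_cons, map_cons, evAt_of_isAcq hp.1, evAt_of_isRel hp.2.1, ← hp.2.2]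
    exact .pair _ ih

theorem lockAltIdx_of_lockAlt_map {L : List ℕ} (hL : ∀ i ∈ L, i < σ.length)
    (h : LockAlt l (L.map (evAt σ))) : LockAltIdx σ l L := by
  generalize hes : L.map (evAt σ) = es at h
  induction h generalizing L with
  | nil => obtain rfl := map_eq_nil_iff.mp hes; exact .nil
  | pending t =>
    obtain ⟨a, rfl, ha⟩ := map_eq_singleton_iff.mp hes
    exact .pending ⟨hL a (mem_singleton_self a), by rw [ha]⟩
  | pair t _ ih =>
    obtain ⟨a, _, rfl, ha, hes⟩ := map_eq_cons_iff.mp hes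
    obtain ⟨r, rest, rfl, hr, rfl⟩ := map_eq_cons_iff.mp hes
    refine .pair ⟨⟨hL a (by simp), by rw [ha]⟩, ⟨hL r (by simp), by rw [hr]⟩, ?_⟩
      (ih (fun i hi => hL i (by simp [hi])) rfl)
    simp [threadOf, ha, hr]

namespace LockAltIdx

variable {L : List ℕ}

theorem isAcq_or_isRel (h : LockAltIdx σ l L) {i : ℕ} (hi : i ∈ L) :
    isAcq σ l i ∨ isRel σ l i := by
  induction h with
  | nil => simp at hi
  | pending ha => rw [mem_singleton.mp hi]; exact .inl ha
  | pair hp _ ih =>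
    rcases mem_cons.mp hi with rfl | hi
    · exact .inl hp.1
    rcases mem_cons.mp hi with rfl | hi
    · exact .inr hp.2.1
    exact ih hi

theorem exists_pair_infix_of_isRel (h : LockAltIdx σ l L) {r : ℕ} (hr : r ∈ L)
    (hrel : isRel σ l r) : ∃ a, [a, r] <:+: L ∧ IsLockPair σ l a r := by
  induction h with
  | nil => simp at hr
  | pending ha => exact absurd (mem_singleton.mp hr).symm (ha.ne_of_isRel hrel)
  | @pair a r' rest hp _ ih =>
    rcases mem_cons.mp hr with rfl | hr
    · exact absurd rfl (hp.1.ne_of_isRel hrel)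
    rcases mem_cons.mp hr with rfl | hr
    · exact ⟨a, (prefix_append [_, _] rest).isInfix, hp⟩
    obtain ⟨a', hinf, hp'⟩ := ih hr
    exact ⟨a', infix_cons (infix_cons hinf), hp'⟩

theorem exists_pair_infix_of_isAcq (h : LockAltIdx σ l L) {a k : ℕ} (hak : [a, k] <+ L)
    (ha : isAcq σ l a) : ∃ r, [a, r] <:+: L ∧ IsLockPair σ l a r := by
  induction h with
  | nil => simp at hak
  | pending => simpa using hak.length_le
  | @pair a' r rest hp _ ih =>
    rcases sublist_cons_iff.mp hak with hak | ⟨_, he, -⟩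
    · rcases sublist_cons_iff.mp hak with hak | ⟨_, he, -⟩
      · obtain ⟨r', hinf, hp'⟩ := ih hak
        exact ⟨r', infix_cons (infix_cons hinf), hp'⟩
      · exact absurd (cons.inj he).1 (ha.ne_of_isRel hp.2.1)
    · obtain rfl := (cons.inj he).1
      exact ⟨r, (prefix_append [_, _] rest).isInfix, hp⟩

theorem filter (h : LockAltIdx σ l L) (hs : L.Pairwise (· < ·)) (p : ℕ → Prop)
    [DecidablePred p] (hTO : ∀ i j, TO σ i j → p j → p i)
    (hsync : ∀ a r a', [a, r] <:+: L → IsLockPair σ l a r → isAcq σ l a' → a < a' →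
      p a → p a' → p r) :
    LockAltIdx σ l (L.filter (p ·)) := by
  induction h with
  | nil => exact .nil
  | @pending a ha =>
    by_cases hpa : p a
    · simpa [hpa] using LockAltIdx.pending ha
    · simpa [hpa] using LockAltIdx.nil
  | @pair a r rest hp hrest ih =>
    simp only [pairwise_cons, mem_cons, forall_eq_or_imp] at hs
    have ih' := ih hs.2.2 fun a r a' hinf => hsync a r a' (infix_cons (infix_cons hinf))
    have hTOar : TO σ a r := ⟨hs.1.1.le, hp.2.1.1, hp.2.2⟩
    by_cases hpa : p a
    · by_cases hpr : p r
      · simpa [hpa, hpr] using LockAltIdx.pair hp ih'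
      · suffices hnil : rest.filter (p ·) = [] by
          simpa [hpa, hpr, hnil] using LockAltIdx.pending hp.1
        refine filter_eq_nil_iff.mpr fun i hi hpi => hpr ?_
        obtain ⟨a', ha'rest, ha', hpa'⟩ : ∃ a' ∈ rest, isAcq σ l a' ∧ p a' := by
          rcases hrest.isAcq_or_isRel hi with hacq | hrel
          · exact ⟨i, hi, hacq, by simpa using hpi⟩
          · obtain ⟨a', hinf, hp'⟩ := hrest.exists_pair_infix_of_isRel hi hrel
            refine ⟨a', hinf.subset (by simp), hp'.1, hTO a' i ?_ (by simpa using hpi)⟩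
            exact ⟨(lt_of_pair_sublist hs.2.2 hinf.sublist).le, hrel.1, hp'.2.2⟩
        exact hsync a r a' (prefix_append [_, _] rest).isInfix hp ha' (hs.1.2 a' ha'rest) hpa hpa'
    · have hpr : ¬ p r := fun hpr => hpa (hTO a r hTOar hpr)
      simpa [hpa, hpr] using ih'

end LockAltIdx

theorem map_evAt_range (σ : List Event) : (range σ.length).map (evAt σ) = σ := by
  refine ext_getElem (by simp) fun i _ hi => ?_
  simp [evAt, getD_eq_getElem?_getD, getElem?_eq_getElem hi]

def lockIdxs (σ : List Event) (l : ℕ) : List ℕ :=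
  (range σ.length).filter (onLock l ∘ evAt σ)

theorem pairwise_lt_lockIdxs : (lockIdxs σ l).Pairwise (· < ·) :=
  pairwise_lt_range.filter _

theorem mem_lockIdxs_of_isRel {r : ℕ} (h : isRel σ l r) : r ∈ lockIdxs σ l := by
  simp [lockIdxs, h.1, onLock_evAt_iff h.1, h]

theorem LockSem.lockAltIdx_lockIdxs (hWF : LockSem σ) (l : ℕ) :
    LockAltIdx σ l (lockIdxs σ l) := by
  refine lockAltIdx_of_lockAlt_map (fun i hi => by simpa [lockIdxs] using (mem_filter.mp hi).1) ?_
  obtain ⟨w, hw, hpre⟩ := hWF l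
  rw [lockIdxs, ← filter_map, map_evAt_range]
  exact hw.lockAlt_of_prefix hpre

end Locks

section Reordering

variable {σ : List Event} {ρ : List ℕ}

theorem exists_lastWrite {x k j : ℕ} (hk : isWrite σ x k) (hkj : k < j) :
    ∃ w, k ≤ w ∧ isWrite σ x w ∧ w < j ∧ ∀ m, w < m → m < j → ¬ isWrite σ x m := by
  classical
  refine ⟨Nat.findGreatest (isWrite σ x) (j - 1), Nat.le_findGreatest (by omega) hk,
    Nat.findGreatest_spec (P := isWrite σ x) (by omega : k ≤ j - 1) hk,
    (Nat.findGreatest_le _).trans_lt (by omega), fun m hwm hmj =>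
      Nat.findGreatest_is_greatest hwm (by omega)⟩

theorem lastWriteIn_iff_of_pairwise_lt (hs : ρ.Pairwise (· < ·))
    (hclosed : ∀ i j, LastWrite σ i j → j ∈ ρ → i ∈ ρ) {i j : ℕ} (hj : j ∈ ρ) :
    LastWriteIn σ ρ i j ↔ LastWrite σ i j := by
  simp only [LastWriteIn, LastWrite, rBefore_iff_lt hs]
  constructor
  · rintro ⟨x, hi, hjr, ⟨hiρ, -, hij⟩, hnone⟩
    refine ⟨x, hi, hjr, hij, fun k hik hkj hk => ?_⟩
    obtain ⟨w, hkw, hw, hwj, hlast⟩ := exists_lastWrite hk hkj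
    have hwρ : w ∈ ρ := hclosed w j ⟨x, hw, hjr, hwj, hlast⟩ hj
    exact hnone w hw ⟨⟨hiρ, hwρ, hik.trans_le hkw⟩, ⟨hwρ, hj, hwj⟩⟩
  · rintro ⟨x, hi, hjr, hij, hnone⟩
    refine ⟨x, hi, hjr, ⟨hclosed i j ⟨x, hi, hjr, hij, hnone⟩ hj, hj, hij⟩, ?_⟩
    rintro k hk ⟨⟨-, -, hik⟩, ⟨-, -, hkj⟩⟩
    exact hnone k hik hkj hk

namespace CorrectReordering

theorem mem_of_lastWrite (hρ : CorrectReordering σ ρ) {i j : ℕ} (hw : LastWrite σ i j)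
    (hj : j ∈ ρ) : i ∈ ρ := by
  obtain ⟨x, -, hread, -⟩ := id hw
  obtain ⟨-, -, -, hbefore, -⟩ := (hρ.2.2.2.2.2 j x hread hj i).mpr hw
  exact hbefore.1

theorem exists_isLockPair_of_lt (hρ : CorrectReordering σ ρ) (hsync : SyncPreserving σ ρ)
    {l a a' : ℕ} (ha : isAcq σ l a) (ha' : isAcq σ l a') (hlt : a < a') (haρ : a ∈ ρ)
    (ha'ρ : a' ∈ ρ) : ∃ r ∈ ρ, a < r ∧ IsLockPair σ l a r := by
  obtain ⟨hnd, hbd, hwf, -, hto, -⟩ := hρ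
  have hM : LockAltIdx σ l (ρ.filter (onLock l ∘ evAt σ)) :=
    lockAltIdx_of_lockAlt_map (fun i hi => hbd i (mem_of_mem_filter hi))
      (by rw [← filter_map]; exact hwf l)
  have haa' : [a, a'] <+ ρ.filter (onLock l ∘ evAt σ) := by
    have := ((rBefore_iff_pair_sublist hnd).mp
      ((hsync l a a' ha ha' haρ ha'ρ).mpr hlt)).filter (onLock l ∘ evAt σ)
    rwa [filter_cons_of_pos, filter_cons_of_pos, filter_nil] at this
    · simp [onLock_evAt_iff ha'.1, ha']
    · simp [onLock_evAt_iff ha.1, ha]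
  obtain ⟨r, hrM, hp⟩ := hM.exists_pair_infix_of_isAcq haa' ha
  have har : [a, r] <+ ρ := hrM.sublist.trans filter_sublist
  refine ⟨r, har.subset (by simp), ?_, hp⟩
  by_contra hge
  have hra := hto r a (har.subset (by simp)) haρ (ha.ne_of_isRel hp.2.1).symm
    ⟨not_lt.mp hge, ha.1, hp.2.2.symm⟩
  have har := (rBefore_iff_pair_sublist hnd).mpr har
  simp only [RBefore] at hra har
  omega

theorem mem_of_isLockPair (hρ : CorrectReordering σ ρ) (hWF : LockSem σ)
    (hsync : SyncPreserving σ ρ) {l a r a' : ℕ} (hpair : [a, r] <:+: lockIdxs σ l)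
    (hp : IsLockPair σ l a r) (ha' : isAcq σ l a') (hlt : a < a') (haρ : a ∈ ρ)
    (ha'ρ : a' ∈ ρ) : r ∈ ρ := by
  -- `r'` follows `a` in the lock alternation of `ρ` and `a0` precedes `r'` in that of `σ`;
  -- if `r' ≠ r` then `r < a0` in the same thread, so `r ∈ ρ` by downward closure.
  obtain ⟨r', hr'ρ, har', hp'⟩ := hρ.exists_isLockPair_of_lt hsync hp.1 ha' hlt haρ ha'ρ
  obtain ⟨a0, ha0, hp0⟩ := (hWF.lockAltIdx_lockIdxs l).exists_pair_infix_of_isRel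
    (mem_lockIdxs_of_isRel hp'.2.1) hp'.2.1
  obtain ⟨-, -, -, hdc, -⟩ := hρ
  have ha0ρ : a0 ∈ ρ := hdc a0 r'
    ⟨(lt_of_pair_sublist pairwise_lt_lockIdxs ha0.sublist).le, hp'.2.1.1, hp0.2.2⟩ hr'ρ
  rcases le_or_le_of_pair_infix pairwise_lt_lockIdxs hpair (mem_lockIdxs_of_isRel hp'.2.1)
    with h | hrr'
  · omega
  rcases hrr'.eq_or_lt with rfl | hrr'
  · exact hr'ρ
  rcases le_or_le_of_pair_infix pairwise_lt_lockIdxs ha0 (hpair.subset (by simp : r ∈ [a, r]))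
    with hra0 | h
  · exact hdc r a0 ⟨hra0, hp0.1.1, by rw [← hp.2.2, hp'.2.2, ← hp0.2.2]⟩ ha0ρ
  · omega

end CorrectReordering

def inTraceOrder (σ : List Event) (ρ : List ℕ) : List ℕ :=
  (range σ.length).filter (· ∈ ρ)

theorem pairwise_lt_inTraceOrder : (inTraceOrder σ ρ).Pairwise (· < ·) :=
  pairwise_lt_range.filter _

theorem mem_inTraceOrder (hbd : ∀ i ∈ ρ, i < σ.length) {i : ℕ} :
    i ∈ inTraceOrder σ ρ ↔ i ∈ ρ := by
  simpa [inTraceOrder] using hbd i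

theorem EnabledIn.of_mem_iff {ρ' : List ℕ} (hmem : ∀ i, i ∈ ρ' ↔ i ∈ ρ) {e : ℕ}
    (he : EnabledIn σ ρ e) : EnabledIn σ ρ' e := by
  obtain ⟨hlen, hnot, hprev⟩ := he
  exact ⟨hlen, (hmem e).not.mpr hnot, fun i hie hTO => (hmem i).mpr (hprev i hie hTO)⟩

namespace CorrectReordering

theorem wellFormedEvents_inTraceOrder (hρ : CorrectReordering σ ρ) (hWF : LockSem σ)
    (hsync : SyncPreserving σ ρ) : WellFormedEvents ((inTraceOrder σ ρ).map (evAt σ)) := by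
  intro l
  rw [filter_map, inTraceOrder, filter_comm]
  exact ((hWF.lockAltIdx_lockIdxs l).filter pairwise_lt_lockIdxs (· ∈ ρ) hρ.2.2.2.1
    fun _ _ _ hpair hp ha' hlt ha ha'ρ =>
      hρ.mem_of_isLockPair hWF hsync hpair hp ha' hlt ha ha'ρ).lockAlt_map

theorem inTraceOrder (hρ : CorrectReordering σ ρ) (hWF : LockSem σ)
    (hsync : SyncPreserving σ ρ) : CorrectReordering σ (inTraceOrder σ ρ) := by
  have hs := pairwise_lt_inTraceOrder (σ := σ) (ρ := ρ)
  have hmem := fun i => mem_inTraceOrder (σ := σ) hρ.2.1 (i := i)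
  refine ⟨hs.nodup, fun i hi => hρ.2.1 i ((hmem i).mp hi),
    hρ.wellFormedEvents_inTraceOrder hWF hsync, fun i j hij hj => ?_,
    fun i j hi hj hne hij => ?_, fun j _ _ hj i => ?_⟩
  · exact (hmem i).mpr (hρ.2.2.2.1 i j hij ((hmem j).mp hj))
  · exact (rBefore_iff_lt hs).mpr ⟨hi, hj, lt_of_le_of_ne hij.1 hne⟩
  · exact lastWriteIn_iff_of_pairwise_lt hs
      (fun i j hw hj => (hmem i).mpr (hρ.mem_of_lastWrite hw ((hmem j).mp hj))) hj

end CorrectReordering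

end Reordering

/-- if `(e1, e2)` is a sync-preserving race of `σ`, then there is a
correct reordering of `σ` in which both `e1` and `e2` are σ-enabled and whose total
order is a restriction of the trace order of `σ` (i.e., a subsequence of `σ`). -/
theorem stmt3 (σ : List Event) (hWF : LockSem σ) (e1 e2 : ℕ)
    (h : SPRace σ e1 e2) :
    ∃ ρ : List ℕ, CorrectReordering σ ρ ∧ EnabledIn σ ρ e1 ∧ EnabledIn σ ρ e2 ∧
      ρ.Pairwise (· < ·) := by
  obtain ⟨-, ρ, hρ, hsync, he1, he2⟩ := h
  have hmem := fun i => mem_inTraceOrder (σ := σ) hρ.2.1 (i := i)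
  exact ⟨inTraceOrder σ ρ, hρ.inTraceOrder hWF hsync, he1.of_mem_iff hmem,
    he2.of_mem_iff hmem, pairwise_lt_inTraceOrder⟩
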